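/- The Euler tour representation map is a bijection from the set of n-trees to the set of treed permutations of size n. -/

import Mathlib

/-- An `X`-labelled planar rooted tree: an (unlabelled) root together with an ordered
list of pairs (label of child, subtree rooted at that child). -/
inductive LTree (X : Type) : Type
  | node : List (X × LTree X) → LTree X

/-- The list of labels of the non-root nodes, in depth-first (pre-order) traversal. -/
def LTree.labels {X : Type} : LTree X → List X
  | .node ts => (ts.attach.map (fun p => p.1.1 :: p.1.2.labels)).flatten
decreasing_by
  obtain ⟨⟨a, b⟩, hm⟩ := p
  have := List.sizeOf_lt_of_mem hm
  simp only [Prod.mk.sizeOf_spec, LTree.node.sizeOf_spec] at *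
  omega

/-- The degree of a labelled tree: its number of non-root nodes. -/
def LTree.degree {X : Type} (t : LTree X) : ℕ := t.labels.length

/-- The Euler tour representation of a labelled tree: traverse the tree clockwise along
its border from root to root, reading each node's label once when first entering it
and once when finally leaving it. -/
def LTree.euler {X : Type} : LTree X → List X
  | .node ts => (ts.attach.map (fun p => p.1.1 :: (p.1.2.euler ++ [p.1.1]))).flatten
decreasing_by
  obtain ⟨⟨a, b⟩, hm⟩ := p
  have := List.sizeOf_lt_of_mem hm
  simp only [Prod.mk.sizeOf_spec, LTree.node.sizeOf_spec] at *
  omega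

/-- A `2`-permutation of its letter set: every letter of the word appears exactly twice. -/
def IsTwoPerm (w : List ℕ) : Prop := ∀ x ∈ w, w.count x = 2

/-- A treed permutation of size `n`. -/
def IsTreedPerm (n : ℕ) (w : List ℕ) : Prop :=
  w.length = 2 * n ∧ (∀ k ∈ Finset.Icc 1 n, w.count k = 2) ∧
    ∀ i l : Fin w.length, i < l → w.get i = w.get l →
      IsTwoPerm ((w.drop ((i : ℕ) + 1)).take ((l : ℕ) - (i : ℕ) - 1))

/-!
Cutting a word `a :: w` at the second occurrence of its first letter writes it as `a M a B`.
For the Euler tour of a tree whose first child is `a`, `M` is the tour of the subtree below `a`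
and `B` the tour of what is left after removing that subtree, so recursing on `M` and `B`
(`LTree.decode`) inverts `LTree.euler` on trees with distinct labels. Conversely, the nesting
condition of a treed permutation passes to `M` and `B`, so decoding and then touring gives the
word back. Euler tours are nested because the factor between the two occurrences of a label is
the tour of the subtree below that node.
-/

theorem List.append_cons_inj_of_notMem_prefixes {α : Type*} [DecidableEq α] {a : α}
    {A A' R R' : List α} (hA : a ∉ A) (hA' : a ∉ A') (h : A ++ a :: R = A' ++ a :: R') :
    A = A' ∧ R = R' := by
  have hlen := congrArg (List.idxOf a) h
  simp only [List.idxOf_append_of_notMem hA, List.idxOf_append_of_notMem hA',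
    List.idxOf_cons_self] at hlen
  simpa using List.append_inj h (by omega)

namespace LTree

variable {X : Type}

def cons (a : X) (s : LTree X) : LTree X → LTree X
  | node ts => node ((a, s) :: ts)

@[elab_as_elim]
theorem cons_induction {P : LTree X → Prop} (nil : P (node []))
    (cons : ∀ a s t, P s → P t → P (cons a s t)) (t : LTree X) : P t :=
  LTree.rec (motive_1 := P) (motive_2 := fun ts => P (node ts)) (motive_3 := fun p => P p.2)
    (fun _ h => h) nil (fun p ts hp hts => cons p.1 p.2 (node ts) hp hts) (fun _ _ h => h) t

@[simp]
theorem labels_nil : (node [] : LTree X).labels = [] := by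
  simp [labels]

@[simp]
theorem labels_cons (a : X) (s t : LTree X) :
    (cons a s t).labels = a :: (s.labels ++ t.labels) := by
  obtain ⟨ts⟩ := t
  simp [cons, labels, List.map_attach_eq_pmap]

@[simp]
theorem euler_nil : (node [] : LTree X).euler = [] := by
  simp [euler]

@[simp]
theorem euler_cons (a : X) (s t : LTree X) :
    (cons a s t).euler = a :: (s.euler ++ a :: t.euler) := by
  obtain ⟨ts⟩ := t
  simp [cons, euler, List.map_attach_eq_pmap]

theorem exists_euler_eq_of_mem {t : LTree X} {x : X} (hx : x ∈ t.labels) :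
    ∃ (A : List X) (s : LTree X) (B : List X),
      t.euler = A ++ x :: (s.euler ++ x :: B) ∧ s.labels.Sublist t.labels := by
  induction t using cons_induction with
  | nil => simp at hx
  | cons a s t hs ht =>
    simp only [labels_cons, List.mem_cons, List.mem_append] at hx
    rcases hx with rfl | hx | hx
    · exact ⟨[], s, t.euler, by simp, by simp⟩
    · obtain ⟨A, s', B, he, hsub⟩ := hs hx
      exact ⟨a :: A, s', B ++ a :: t.euler, by simp [he],
        by rw [labels_cons]; exact (hsub.trans (List.sublist_append_left _ _)).cons _⟩
    · obtain ⟨A, s', B, he, hsub⟩ := ht hx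
      exact ⟨a :: (s.euler ++ a :: A), s', B, by simp [he],
        by rw [labels_cons]; exact (hsub.trans (List.sublist_append_right _ _)).cons _⟩

section DecidableEq

variable [DecidableEq X]

theorem count_euler (t : LTree X) (x : X) : t.euler.count x = 2 * t.labels.count x := by
  induction t using cons_induction with
  | nil => simp
  | cons a s t hs ht =>
    simp only [euler_cons, labels_cons, List.count_cons, List.count_append]
    omega

theorem mem_euler {t : LTree X} {x : X} : x ∈ t.euler ↔ x ∈ t.labels := by
  simp only [← List.count_pos_iff, count_euler]
  omega

theorem euler_perm_append_self_iff {t : LTree X} {l : List X} :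
    t.euler.Perm (l ++ l) ↔ t.labels.Perm l := by
  simp only [List.perm_iff_count, count_euler, List.count_append]
  exact forall_congr' fun x => by omega

def decode : List X → LTree X
  | [] => node []
  | a :: w => cons a (decode (w.take (w.idxOf a))) (decode (w.drop (w.idxOf a + 1)))
termination_by w => w.length
decreasing_by all_goals simp only [List.length_take, List.length_drop, List.length_cons]; omega

theorem decode_cons_append_cons {a : X} {M : List X} (haM : a ∉ M) (B : List X) :
    decode (a :: (M ++ a :: B)) = cons a (decode M) (decode B) := by
  rw [decode]
  simp [List.idxOf_append_of_notMem haM]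

theorem decode_euler {t : LTree X} (ht : t.labels.Nodup) : decode t.euler = t := by
  induction t using cons_induction with
  | nil => simp [decode]
  | cons a s t hs ht' =>
    simp only [labels_cons, List.nodup_cons, List.mem_append, not_or, List.nodup_append] at ht
    rw [euler_cons, decode_cons_append_cons (mt mem_euler.1 ht.1.1), hs ht.2.1, ht' ht.2.2.1]

end DecidableEq

end LTree

def IsNested (w : List ℕ) : Prop :=
  ∀ A M B x, w = A ++ x :: (M ++ x :: B) → IsTwoPerm M

theorem isNested_iff_get {w : List ℕ} : IsNested w ↔
    ∀ i l : Fin w.length, i < l → w.get i = w.get l →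
      IsTwoPerm ((w.drop ((i : ℕ) + 1)).take ((l : ℕ) - (i : ℕ) - 1)) := by
  constructor
  · intro h i l hil hget
    refine h (w.take i) _ (w.drop (l + 1)) (w.get i) ?_
    have hl : (w.drop (i + 1)).drop (l - i - 1) = w.drop l := by
      rw [List.drop_drop]; congr 1; omega
    conv_lhs => rw [← List.take_append_drop i w, List.drop_eq_getElem_cons i.2,
      ← List.take_append_drop (l - i - 1) (w.drop (i + 1)), hl, List.drop_eq_getElem_cons l.2]
    simp only [List.get_eq_getElem] at hget ⊢
    rw [hget]
  · rintro h A M B x rfl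
    have hlt : A.length + M.length + 1 < (A ++ x :: (M ++ x :: B)).length := by
      simp only [List.length_append, List.length_cons]; omega
    have hx : (A ++ x :: (M ++ x :: B))[A.length + M.length + 1] = x :=
      List.getElem_of_append (l₁ := A ++ x :: M) (l₂ := B) (by simp) (by
        simp only [List.length_append, List.length_cons]; omega)
    have := h ⟨A.length, by simp⟩ ⟨A.length + M.length + 1, hlt⟩ (by simp [Fin.lt_def])
      (by simp [hx])
    simpa [show A.length + M.length + 1 - A.length - 1 = M.length by omega] using this

theorem IsNested.infix {u w : List ℕ} (hw : IsNested w) (huw : u <:+: w) : IsNested u := by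
  obtain ⟨p, s, rfl⟩ := huw
  rintro A M B x rfl
  exact hw (p ++ A) M (B ++ s) x (by simp)

theorem isTwoPerm_of_perm_append_self {w l : List ℕ} (hl : l.Nodup) (h : w.Perm (l ++ l)) :
    IsTwoPerm w := fun x hx => by
  rw [h.count_eq, List.count_append, List.count_eq_one_of_mem hl (by simpa using h.subset hx)]

theorem IsTwoPerm.of_cons_append_cons {a : ℕ} {M B : List ℕ}
    (h : IsTwoPerm (a :: (M ++ a :: B))) (hM : IsTwoPerm M) : IsTwoPerm B := by
  intro x hx
  have hw := h x (by simp [hx])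
  have hB := List.count_pos_iff.2 hx
  have hxM : M.count x = 0 ∨ M.count x = 2 :=
    if hxM : x ∈ M then .inr (hM x hxM) else .inl (List.count_eq_zero.2 hxM)
  simp only [List.count_cons, List.count_append, beq_iff_eq] at hw
  split_ifs at hw <;> omega

theorem isTreedPerm_iff {n : ℕ} {w : List ℕ} :
    IsTreedPerm n w ↔ w.Perm (List.range' 1 n ++ List.range' 1 n) ∧ IsNested w := by
  have hcount (k : ℕ) : (List.range' 1 n ++ List.range' 1 n).count k =
      if k ∈ Finset.Icc 1 n then 2 else 0 := by
    simp only [List.count_append, List.count_range_1', Finset.mem_Icc]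
    split_ifs <;> omega
  rw [IsTreedPerm, isNested_iff_get, ← and_assoc]
  refine and_congr_left fun _ => ⟨fun ⟨hlen, hcw⟩ => ?_, fun h => ⟨?_, fun k hk => ?_⟩⟩
  · refine (List.Subperm.perm_of_length_le ?_ ?_).symm
    swap
    · simp only [hlen, List.length_append, List.length_range']
      omega
    refine List.subperm_ext_iff.2 fun k hk => ?_
    have hkn : k ∈ Finset.Icc 1 n := by simpa [List.mem_range'_1, Nat.lt_one_add_iff] using hk
    rw [hcount, if_pos hkn, hcw k hkn]
  · simp only [h.length_eq, List.length_append, List.length_range']; omega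
  · rw [h.count_eq, hcount, if_pos hk]

namespace LTree

theorem isTwoPerm_euler {t : LTree ℕ} (ht : t.labels.Nodup) : IsTwoPerm t.euler :=
  isTwoPerm_of_perm_append_self ht (euler_perm_append_self_iff.2 (List.Perm.refl _))

theorem isNested_euler {t : LTree ℕ} (ht : t.labels.Nodup) : IsNested t.euler := by
  rintro A M B x he
  have hx : x ∈ t.labels := mem_euler.1 (by simp [he])
  obtain ⟨A', s, B', he', hsub⟩ := exists_euler_eq_of_mem hx
  have hcount : t.euler.count x = 2 := by rw [count_euler, List.count_eq_one_of_mem ht hx]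
  have notMem_of_eq {A M B : List ℕ} (h : t.euler = A ++ x :: (M ++ x :: B)) :
      x ∉ A ∧ x ∉ M := by
    rw [h] at hcount
    simp only [List.count_append, List.count_cons_self] at hcount
    exact ⟨List.count_eq_zero.1 (by omega), List.count_eq_zero.1 (by omega)⟩
  obtain ⟨hA, hM⟩ := notMem_of_eq he
  obtain ⟨hA', hs⟩ := notMem_of_eq he'
  obtain ⟨-, hR⟩ := List.append_cons_inj_of_notMem_prefixes hA hA' (he.symm.trans he')
  obtain ⟨rfl, -⟩ := List.append_cons_inj_of_notMem_prefixes hM hs hR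
  exact isTwoPerm_euler (ht.sublist hsub)

theorem euler_decode {w : List ℕ} (hw : IsTwoPerm w) (hn : IsNested w) : (decode w).euler = w :=
  match w with
  | [] => by simp [decode]
  | a :: w => by
    have ha : a ∈ w := by
      have h2 := hw a List.mem_cons_self
      rw [List.count_cons_self] at h2
      exact List.count_pos_iff.1 (by omega)
    obtain ⟨M, B, haM, hw', -⟩ := List.exists_erase_eq ha
    rw [hw'] at hw hn ⊢
    have hM : IsTwoPerm M := hn [] M B a rfl
    have hB : IsTwoPerm B := hw.of_cons_append_cons hM
    rw [decode_cons_append_cons haM, euler_cons,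
      euler_decode hM (hn.infix ⟨[a], a :: B, by simp⟩),
      euler_decode hB (hn.infix ⟨a :: (M ++ [a]), [], by simp⟩)]
termination_by w.length
decreasing_by all_goals simp only [hw', List.length_cons, List.length_append]; omega

end LTree

/-- The Euler tour representation is a bijection from `n`-trees onto treed
permutations of size `n`. -/
theorem euler_bijOn (n : ℕ) :
    Set.BijOn LTree.euler
      {t : LTree ℕ | t.labels.Perm (List.range' 1 n)}
      {w : List ℕ | IsTreedPerm n w} := by
  have hL : (List.range' 1 n).Nodup := List.nodup_range'
  have euler_decode_of_treed {w : List ℕ} (hw : IsTreedPerm n w) : (LTree.decode w).euler = w :=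
    have hw := isTreedPerm_iff.1 hw
    LTree.euler_decode (isTwoPerm_of_perm_append_self hL hw.1) hw.2
  refine Set.InvOn.bijOn (f' := LTree.decode)
    ⟨fun t ht => LTree.decode_euler (ht.nodup_iff.2 hL), fun w hw => euler_decode_of_treed hw⟩
    (fun t ht => ?_) (fun w hw => ?_)
  · exact isTreedPerm_iff.2
      ⟨LTree.euler_perm_append_self_iff.2 ht, LTree.isNested_euler (ht.nodup_iff.2 hL)⟩
  · refine LTree.euler_perm_append_self_iff.1 ?_
    rw [euler_decode_of_treed hw]
    exact (isTreedPerm_iff.1 hw).1
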